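/- arXiv:2212.07343 — 2 statements merged into one kernel-verified Lean document; each statement's English description precedes it below -/
import Mathlib

section
/- Let t ≥ 2 be an integer and let λ be an orthogonal or symplectic t-core whose Young diagram is contained in an nt × nt square (i.e., l(λ) ≤ nt and λ_1 ≤ nt). Then sgn(w_t(λ;nt)) · sgn(w_t(λ';nt)) = (−1)^{rk(λ)}. -/
open scoped BigOperators

noncomputable section

/-! ## The ring of symmetric functions and basic operators -/

/-- The ring of symmetric functions `Λ` (with coefficients in `ℚ`, so that the
half occurring in the definition of `sp_λ` is available), realised as the
polynomial ring in the algebraically independent complete homogeneous symmetric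
functions `h₁, h₂, h₃, …`; the variable `n : ℕ` stands for `h_{n+1}`. -/
abbrev SymF : Type := MvPolynomial ℕ ℚ

/-- The complete homogeneous symmetric function `h_r ∈ Λ`, with `h_0 = 1` and
`h_r = 0` for `r < 0`. -/
def hh (r : ℤ) : SymF :=
  if r < 0 then 0 else if r = 0 then 1 else MvPolynomial.X (r.toNat - 1)

/-- The algebra homomorphism `φ_t : Λ → Λ` determined by `φ_t h_r = h_{r/t}`
if `t ∣ r` and `φ_t h_r = 0` otherwise. -/
def phi (t : ℕ) : SymF →ₐ[ℚ] SymF :=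
  MvPolynomial.aeval fun n =>
    if t ∣ (n + 1) then hh (((n + 1) / t : ℕ) : ℤ) else 0

/-- The elementary symmetric function `e_r`, via the Jacobi–Trudi determinant
`e_r = s_{(1^r)} = det_{1 ≤ i,j ≤ r}(h_{1 - i + j})`. -/
def ee (r : ℕ) : SymF :=
  Matrix.det (Matrix.of fun i j : Fin r => hh (1 + (j : ℤ) - (i : ℤ)))

/-- The involution `ω : Λ → Λ`, determined by `ω h_r = e_r`. -/
def omegaSym : SymF →ₐ[ℚ] SymF :=
  MvPolynomial.aeval fun n => ee (n + 1)

/-- `(-1)^z` for an integer exponent `z`. -/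
def msign (z : ℤ) : ℤ := if Even z then 1 else -1

/-! ## Partitions -/

/-- A partition, encoded as a weakly decreasing, eventually zero function
`ℕ → ℕ` (0-indexed: `f i` is the part `λ_{i+1}`). -/
def IsPartition (f : ℕ → ℕ) : Prop :=
  Antitone f ∧ ∃ N, ∀ i, N ≤ i → f i = 0

/-- The length `l(λ)` (number of nonzero parts). -/
def plen (f : ℕ → ℕ) : ℕ := sInf {N | ∀ i, N ≤ i → f i = 0}

/-- Containment `μ ⊆ λ` of partitions. -/
def SubP (mu lam : ℕ → ℕ) : Prop := ∀ i, mu i ≤ lam i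

/-- The conjugate partition `λ'`. -/
def conjP (f : ℕ → ℕ) : ℕ → ℕ := fun j => Set.ncard {i | j < f i}

/-- The Frobenius rank `rk(λ)` (side length of the Durfee square). -/
def rk (f : ℕ → ℕ) : ℕ := Set.ncard {i | i < f i}

/-- The size `|λ|` of a partition. -/
def psize (f : ℕ → ℕ) : ℕ := ∑ i ∈ Finset.range (plen f), f i

/-- `λ` is `z`-asymmetric, i.e. `λ = (a | a + z)` in Frobenius notation, which
amounts to `λ'_i = λ_i + z` for all `1 ≤ i ≤ rk(λ)`.  `(-1)`-asymmetric
partitions are called orthogonal, `1`-asymmetric ones symplectic, and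
`0`-asymmetric ones are exactly the self-conjugate ones. -/
def ZAsymmetric (z : ℤ) (f : ℕ → ℕ) : Prop :=
  ∀ i < rk f, (conjP f i : ℤ) = (f i : ℤ) + z

/-- The one-row partition `(c)`. -/
def rowP (c : ℕ) : ℕ → ℕ := fun i => if i = 0 then c else 0

/-- `λ` is a `t`-core: no box of the Young diagram has hook length `t`
(the hook length of the box `(i,j)` is `λ_i + λ'_j - i - j + 1`, 1-indexed). -/
def IsTCore (t : ℕ) (f : ℕ → ℕ) : Prop :=
  ∀ i j, j < f i → f i + conjP f j ≠ i + j + 1 + t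

/-! ## Schur functions and universal characters via Jacobi–Trudi determinants -/

/-- The Jacobi–Trudi determinant `det_{1 ≤ i,j ≤ n}(h_{λ_i - μ_j - i + j})`. -/
def sSkewN (lam mu : ℕ → ℕ) (n : ℕ) : SymF :=
  Matrix.det (Matrix.of fun i j : Fin n =>
    hh ((lam i : ℤ) - (mu j : ℤ) - (i : ℤ) + (j : ℤ)))

open Classical in
/-- The skew Schur function `s_{λ/μ}`, defined by the Jacobi–Trudi formula
(and `0` if `μ ⊄ λ`). -/
def sSkew (lam mu : ℕ → ℕ) : SymF :=
  if SubP mu lam then sSkewN lam mu (plen lam) else 0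

/-- The Schur function `s_λ`. -/
def sFun (lam : ℕ → ℕ) : SymF := sSkew lam fun _ => 0

/-- The universal orthogonal character
`o_λ = det_{1 ≤ i,j ≤ n}(h_{λ_i - i + j} - h_{λ_i - i - j})`. -/
def oU (lam : ℕ → ℕ) : SymF :=
  Matrix.det (Matrix.of fun i j : Fin (plen lam) =>
    hh ((lam i : ℤ) - (i : ℤ) + (j : ℤ)) -
      hh ((lam i : ℤ) - (i : ℤ) - (j : ℤ) - 2))

/-- The universal symplectic character
`sp_λ = (1/2) · det_{1 ≤ i,j ≤ n}(h_{λ_i - i + j} + h_{λ_i - i - j + 2})`. -/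
def spU (lam : ℕ → ℕ) : SymF :=
  (1 / 2 : ℚ) • Matrix.det (Matrix.of fun i j : Fin (plen lam) =>
    hh ((lam i : ℤ) - (i : ℤ) + (j : ℤ)) +
      hh ((lam i : ℤ) - (i : ℤ) - (j : ℤ)))

/-- The universal odd orthogonal character
`so_λ = det_{1 ≤ i,j ≤ n}(h_{λ_i - i + j} + h_{λ_i - i - j + 1})`. -/
def soU (lam : ℕ → ℕ) : SymF :=
  Matrix.det (Matrix.of fun i j : Fin (plen lam) =>
    hh ((lam i : ℤ) - (i : ℤ) + (j : ℤ)) +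
      hh ((lam i : ℤ) - (i : ℤ) - (j : ℤ) - 1))

/-- The variant `so⁻_λ = det_{1 ≤ i,j ≤ n}(h_{λ_i - i + j} - h_{λ_i - i - j + 1})`. -/
def soMinusU (lam : ℕ → ℕ) : SymF :=
  Matrix.det (Matrix.of fun i j : Fin (plen lam) =>
    hh ((lam i : ℤ) - (i : ℤ) + (j : ℤ)) -
      hh ((lam i : ℤ) - (i : ℤ) - (j : ℤ) - 1))

/-- The rational universal character `rs_{λ,μ}` (one alphabet), via Koike's block
determinant, for weakly decreasing integer sequences `λ`, `μ` of lengths `n`, `m`. -/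
def rsN (n m : ℕ) (lam mu : ℕ → ℤ) : SymF :=
  Matrix.det (Matrix.fromBlocks
    (Matrix.of fun i j : Fin n => hh (lam i - (i : ℤ) + (j : ℤ)))
    (Matrix.of fun (i : Fin n) (j : Fin m) => hh (lam i - (i : ℤ) - (j : ℤ) - 1))
    (Matrix.of fun (i : Fin m) (j : Fin n) => hh (mu i - (i : ℤ) - (j : ℤ) - 1))
    (Matrix.of fun i j : Fin m => hh (mu i - (i : ℤ) + (j : ℤ))))

/-- `rs_{λ,μ}` for partitions `λ`, `μ`. -/
def rsP (lam mu : ℕ → ℕ) : SymF :=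
  rsN (plen lam) (plen mu) (fun i => (lam i : ℤ)) fun i => (mu i : ℤ)

/-! ## Beta sets, cores, quotients and signs -/

/-- The beta set `β(λ; N) = {λ_i + N - i : 1 ≤ i ≤ N}`. -/
def betaSet (lam : ℕ → ℕ) (N : ℕ) : Finset ℕ :=
  (Finset.range N).image fun i => lam i + (N - 1 - i)

/-- `m_r(λ; N)`: the number of elements of `β(λ; N)` congruent to `r` mod `t`. -/
def mr (t : ℕ) (lam : ℕ → ℕ) (N r : ℕ) : ℕ :=
  ((betaSet lam N).filter fun x => x % t = r).card

/-- The `r`-th component `λ^{(r)}` of the `t`-quotient of `λ` (computed, as per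
the convention of the paper, from a beta set whose size is a multiple of `t`):
writing the elements of `β(λ; N)` in residue class `r` as `ξ_k t + r` with
`ξ_1 > ⋯ > ξ_m ≥ 0`, the `k`-th part is `ξ_k - m + k`. -/
def tQuot (t : ℕ) (lam : ℕ → ℕ) (r : ℕ) : ℕ → ℕ := fun k =>
  let N := t * (plen lam + 1)
  let S := (betaSet lam N).filter fun x => x % t = r
  if k < S.card then (S.sort (· ≤ ·)).getD (S.card - 1 - k) 0 / t + (k + 1) - S.card
  else 0

/-- The `t`-core of `λ`: its `i`-th part is `ξ̃_i - N + i` where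
`ξ̃_1 > ⋯ > ξ̃_N` are the integers `k t + r`, `0 ≤ k < m_r(λ; N)`, `0 ≤ r < t`. -/
def tCore (t : ℕ) (lam : ℕ → ℕ) : ℕ → ℕ := fun i =>
  let N := t * (plen lam + 1)
  let T := (Finset.range t).biUnion fun r =>
    (Finset.range (mr t lam N r)).image fun k => k * t + r
  if i < N then (T.sort (· ≤ ·)).getD (N - 1 - i) 0 + (i + 1) - N else 0

/-- The sign of the permutation `w_t(λ; N)` sorting the beta set so that the
residues mod `t` increase and the entries within a residue class decrease,
computed as `(-1)` to the number of inversions: an inversion is a pair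
`x > y` of elements of the beta set with `x mod t > y mod t`. -/
def sgnW (t : ℕ) (lam : ℕ → ℕ) (N : ℕ) : ℤ :=
  (-1) ^ ((betaSet lam N ×ˢ betaSet lam N).filter fun p : ℕ × ℕ =>
    p.2 < p.1 ∧ p.2 % t < p.1 % t).card

/-! ## Ribbons and tileability -/

/-- The cells of the skew shape `λ/μ` (0-indexed rows and columns). -/
def SkewCells (lam mu : ℕ → ℕ) : Set (ℕ × ℕ) := {c | mu c.1 ≤ c.2 ∧ c.2 < lam c.1}

/-- Two cells are adjacent if they share an edge. -/
def CellAdj (c d : ℕ × ℕ) : Prop :=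
  (c.1 = d.1 ∧ (c.2 + 1 = d.2 ∨ d.2 + 1 = c.2)) ∨
    (c.2 = d.2 ∧ (c.1 + 1 = d.1 ∨ d.1 + 1 = c.1))

/-- A set of cells is (edge-)connected. -/
def ConnectedCells (S : Set (ℕ × ℕ)) : Prop :=
  ∀ c ∈ S, ∀ d ∈ S, Relation.ReflTransGen (fun x y => x ∈ S ∧ y ∈ S ∧ CellAdj x y) c d

/-- The set of cells contains a `2 × 2` square. -/
def Has2x2 (S : Set (ℕ × ℕ)) : Prop :=
  ∃ i j, (i, j) ∈ S ∧ (i + 1, j) ∈ S ∧ (i, j + 1) ∈ S ∧ (i + 1, j + 1) ∈ S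

/-- The skew shape `λ/μ` is a `t`-ribbon: connected, `t` cells, no `2 × 2` square. -/
def IsRibbon (t : ℕ) (lam mu : ℕ → ℕ) : Prop :=
  SubP mu lam ∧ (SkewCells lam mu).ncard = t ∧
    ConnectedCells (SkewCells lam mu) ∧ ¬Has2x2 (SkewCells lam mu)

/-- The height of a ribbon `λ/μ`: one less than the number of rows it occupies. -/
def ribbonHeight (lam mu : ℕ → ℕ) : ℕ :=
  (Prod.fst '' SkewCells lam mu).ncard - 1

/-- `ν` (as `ν 0, ν 1, …, ν k`) is a ribbon decomposition of the skew shape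
`λ/μ` into `t`-ribbons: `ν 0 = μ`, `ν k = λ`, every `ν i` is a partition, and
each `ν (i+1) / ν i` is a `t`-ribbon. -/
def IsRibbonDecomp (t : ℕ) (mu lam : ℕ → ℕ) (k : ℕ) (ν : ℕ → ℕ → ℕ) : Prop :=
  ν 0 = mu ∧ ν k = lam ∧ (∀ i ≤ k, IsPartition (ν i)) ∧
    ∀ i < k, IsRibbon t (ν (i + 1)) (ν i)

/-- The height of a ribbon decomposition: the sum of the heights of its ribbons.
The sign `sgn_t(λ/μ)` is `(-1)` to this quantity (for any decomposition). -/
def decompHeight (ν : ℕ → ℕ → ℕ) (k : ℕ) : ℕ :=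
  ∑ i ∈ Finset.range k, ribbonHeight (ν (i + 1)) (ν i)

/-- The skew shape `λ/μ` is tileable by `t`-ribbons. -/
def Tileable (t : ℕ) (mu lam : ℕ → ℕ) : Prop :=
  ∃ k ν, IsRibbonDecomp t mu lam k ν

/-! ## The signs `ε` of Ayyer–Kumari -/

/-- The exponent `ε^o_{λ;nt}`. -/
def epsO (t : ℕ) (lam : ℕ → ℕ) (n : ℕ) : ℕ :=
  (∑ r ∈ Finset.Icc ((t + 2) / 2) (t - 1), Nat.choose (mr t lam (n * t) r + 1) 2)
    + rk (tCore t lam)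
    + if 2 ∣ t then Nat.choose (n + 1) 2 + n * rk (tCore t lam) else 0

/-- The exponent `ε^sp_{λ;nt}`. -/
def epsSp (t : ℕ) (lam : ℕ → ℕ) (n : ℕ) : ℕ :=
  (∑ r ∈ Finset.Icc (t / 2) (t - 2), Nat.choose (mr t lam (n * t) r + 1) 2)
    + if 2 ∣ t then Nat.choose (n + 1) 2 + n * rk (tCore t lam) else 0

/-- The exponent `ε^so_{λ;nt}`. -/
def epsSo (t : ℕ) (lam : ℕ → ℕ) (n : ℕ) : ℕ :=
  (∑ r ∈ Finset.Icc ((t + 1) / 2) (t - 1), Nat.choose (mr t lam (n * t) r + 1) 2)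
    + if 2 ∣ t then 0 else n * rk (tCore t lam)

/-! ## Evaluation at a finite complex alphabet -/

/-- The complete homogeneous polynomial `h_r(y₁,…,y_N)` evaluated at complex
numbers: the sum over all multisets of size `r` of the product of the values. -/
def hEval {N : ℕ} (y : Fin N → ℂ) (r : ℕ) : ℂ :=
  ∑ m ∈ (Finset.univ : Finset (Fin N)).sym r, (Multiset.map y (m : Multiset (Fin N))).prod

/-- Evaluation of a universal symmetric function at the finite alphabet
`y₁, …, y_N` (substituting `h_r ↦ h_r(y)`). -/
def evalSym {N : ℕ} (y : Fin N → ℂ) : SymF →ₐ[ℚ] ℂ :=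
  MvPolynomial.aeval fun n => hEval y (n + 1)

/-- The Schur polynomial `s_λ(y₁,…,y_N)` (equal to the ratio of alternants when
the `y_i` are distinct, and `0` when `l(λ) > N`). -/
def schurC {N : ℕ} (lam : ℕ → ℕ) (y : Fin N → ℂ) : ℂ := evalSym y (sFun lam)

/-- The algebra homomorphism `φ_t^q : Λ → Λ[q]` with
`φ_t^q h_{at+b} = q^b ∑_{k ≥ 0} q^{kt} h_{a-k}` for `a ≥ 0`, `0 ≤ b ≤ t-1`
(the sum is finite since `h_{a-k} = 0` for `k > a`). -/
def phiQ (t : ℕ) : SymF →ₐ[ℚ] Polynomial SymF :=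
  MvPolynomial.aeval fun m =>
    ∑ k ∈ Finset.range ((m + 1) / t + 1),
      Polynomial.C (hh ((((m + 1) / t - k : ℕ)) : ℤ)) *
        Polynomial.X ^ ((m + 1) % t + k * t)


/-!
Since `λ` fits into the `N × N` box, `N = nt`, the beta set `β(λ'; N)` is the complement of
`2N - 1 - β(λ; N)` in `[0, 2N)`, and `λ` being a `t`-core makes both beta sets flush `t`-abaci.
Conjugation exchanges the orthogonal and the symplectic case, so let `λ` be orthogonal. Then the
beads of `β(λ)` beyond `N` are those of `β(λ')` shifted by one; combined with the complementation
this forces the runners of `β(λ')` to be those of `β(λ)` rotated by one, with exactly `n` beads on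
runner `0` of `β(λ)`. So `sgn w_t(λ'; N)` counts the inversions of `β(λ)` for the order of the
runners in which runner `0` comes last. Modulo 2 the two inversion numbers add up to the number of
pairs of beads at weakly ordered positions with exactly one of them on runner `0`; counted bead by
bead, this number plus the number `rk λ` of beads beyond `N` is `(n + 1) n (t - 1)`, which is even.
-/

open Finset

lemma IsLowerSet.lt_ncard_iff {s : Set ℕ} (hs : IsLowerSet s) (hne : s ≠ Set.univ) (i : ℕ) :
    i < s.ncard ↔ i ∈ s := by
  obtain ⟨a, rfl⟩ := hs.eq_univ_or_Iio.resolve_left hne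
  simp

lemma Nat.mul_add_div_of_lt {k t r : ℕ} (hr : r < t) : (k * t + r) / t = k := by
  rw [Nat.add_comm, Nat.add_mul_div_right _ _ (by omega), Nat.div_eq_of_lt hr, zero_add]

lemma Nat.mod_eq_iff_mod_eq_sub_of_dvd {t x y s : ℕ} (hs : s < t) (h : t ∣ x + y + 1) :
    x % t = s ↔ y % t = t - 1 - s := by
  have hx := Nat.mod_lt x (by omega : 0 < t)
  have hy := Nat.mod_lt y (by omega : 0 < t)
  have hsum : x % t + y % t + 1 = t := by
    refine Nat.eq_of_dvd_of_lt_two_mul (by omega) ?_ (by omega)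
    have : x % t + y % t + 1 ≡ x + y + 1 [MOD t] :=
      ((Nat.mod_modEq x t).add (Nat.mod_modEq y t)).add_right 1
    exact Nat.modEq_zero_iff_dvd.1 (this.trans (Nat.modEq_zero_iff_dvd.2 h))
  omega

lemma Nat.card_filter_range_mul_mod_eq {t s : ℕ} (ht : 0 < t) (hs : s < t) (M : ℕ) :
    #{x ∈ range (M * t) | x % t = s} = M := by
  have := Nat.count_modEq_card (M * t) ht s
  rw [Nat.count_eq_card_filter_range, Nat.mul_mod_left, Nat.mul_div_cancel _ ht] at this
  simpa [Nat.ModEq, Nat.mod_eq_of_lt hs] using this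

lemma Finset.card_filter_add_card_filter_eq {α : Type*} (s : Finset α) (p q : α → Prop)
    [DecidablePred p] [DecidablePred q] :
    #{a ∈ s | p a} + #{a ∈ s | q a} = #{a ∈ s | Xor (p a) (q a)} + 2 * #{a ∈ s | p a ∧ q a} := by
  simp only [card_filter, mul_sum, ← sum_add_distrib]
  refine sum_congr rfl fun a _ => ?_
  by_cases p a <;> by_cases q a <;> simp [*]

lemma Finset.card_filter_product_eq_sum_left {α β : Type*} (s : Finset α) (s' : Finset β)
    (p : α → β → Prop) [∀ a b, Decidable (p a b)] :
    #{q ∈ s ×ˢ s' | p q.1 q.2} = ∑ a ∈ s, #{b ∈ s' | p a b} := by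
  simp only [card_filter, sum_product]

lemma Finset.card_filter_product_eq_sum_right {α β : Type*} (s : Finset α) (s' : Finset β)
    (p : α → β → Prop) [∀ a b, Decidable (p a b)] :
    #{q ∈ s ×ˢ s' | p q.1 q.2} = ∑ b ∈ s', #{a ∈ s | p a b} := by
  simp only [card_filter, sum_product_right]

lemma Finset.card_filter_product_eq_of_leftInverse {α β : Type*} {s : Finset α} {s' : Finset β}
    {e : α → β} {e' : β → α} (h₁ : Function.LeftInverse e' e) (h₂ : Function.RightInverse e' e)
    (hs : ∀ a, e a ∈ s' ↔ a ∈ s) (p : β → β → Prop) [∀ a b, Decidable (p a b)] :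
    #{q ∈ s' ×ˢ s' | p q.1 q.2} = #{q ∈ s ×ˢ s | p (e q.1) (e q.2)} := by
  have hs' : ∀ b, b ∈ s' ↔ e' b ∈ s := fun b => by rw [← hs, h₂ b]
  refine card_nbij' (Prod.map e' e') (Prod.map e e) (fun q hq => ?_) (fun q hq => ?_)
    (fun q _ => ?_) (fun q _ => ?_)
  · simp only [coe_filter, mem_product, Set.mem_ofPred_eq, Prod.map_fst, Prod.map_snd,
      h₂ _, ← hs'] at hq ⊢
    exact hq
  · simp only [coe_filter, mem_product, Set.mem_ofPred_eq, Prod.map_fst, Prod.map_snd,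
      hs] at hq ⊢
    exact hq
  · exact Prod.ext (h₂ _) (h₂ _)
  · exact Prod.ext (h₁ _) (h₁ _)

section Partitions

variable {f : ℕ → ℕ}

lemma IsPartition.lt_conjP_iff (hf : IsPartition f) (i j : ℕ) : i < conjP f j ↔ j < f i := by
  obtain ⟨N, hN⟩ := hf.2
  refine IsLowerSet.lt_ncard_iff (fun a b hba ha => lt_of_lt_of_le ha (hf.1 hba)) (fun h => ?_) i
  have : N ∈ {i | j < f i} := h ▸ Set.mem_univ N
  simp [hN N le_rfl] at this

lemma Antitone.lt_rk_iff (hf : Antitone f) (i : ℕ) : i < rk f ↔ i < f i := by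
  refine IsLowerSet.lt_ncard_iff (fun a b hba ha => ?_) (fun h => ?_) i
  · exact lt_of_le_of_lt hba (lt_of_lt_of_le ha (hf hba))
  · have : f 0 ∈ {i | i < f i} := h ▸ Set.mem_univ _
    exact (lt_irrefl _) (lt_of_lt_of_le this (hf (Nat.zero_le _)))

lemma IsPartition.conjP_conjP (hf : IsPartition f) : conjP (conjP f) = f := by
  funext j
  have : {i | j < conjP f i} = Set.Iio (f j) := by
    ext i
    simp [hf.lt_conjP_iff]
  rw [conjP, this, Set.ncard_Iio_nat]

lemma IsPartition.isPartition_conjP (hf : IsPartition f) : IsPartition (conjP f) := by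
  refine ⟨fun a b hab => le_of_forall_lt fun i hi => ?_, f 0, fun j hj => ?_⟩
  · rw [hf.lt_conjP_iff] at hi ⊢
    omega
  · by_contra h
    have := (hf.lt_conjP_iff 0 j).1 (Nat.pos_of_ne_zero h)
    omega

lemma IsPartition.rk_conjP (hf : IsPartition f) : rk (conjP f) = rk f := by
  simp only [rk, hf.lt_conjP_iff]

lemma IsPartition.conjP_zero_le_plen (hf : IsPartition f) : conjP f 0 ≤ plen f := by
  refine not_lt.1 fun h => ?_
  have hz : f (plen f) = 0 := Nat.sInf_mem hf.2 (plen f) le_rfl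
  have := (hf.lt_conjP_iff _ 0).1 h
  omega

lemma IsPartition.lt_of_lt_add_conjP (hf : IsPartition f) {i j : ℕ}
    (h : i + j < f i + conjP f j) : j < f i := by
  by_contra hj
  have := (hf.lt_conjP_iff i j).not.2 hj
  omega

lemma IsPartition.isTCore_conjP {t : ℕ} (hf : IsPartition f) (hc : IsTCore t f) :
    IsTCore t (conjP f) := by
  intro i j hj
  rw [hf.conjP_conjP]
  have := hc j i ((hf.lt_conjP_iff j i).1 hj)
  omega

lemma IsPartition.zAsymmetric_conjP {z : ℤ} (hf : IsPartition f) (h : ZAsymmetric z f) :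
    ZAsymmetric (-z) (conjP f) := by
  intro i hi
  rw [hf.rk_conjP] at hi
  rw [hf.conjP_conjP, h i hi]
  ring

end Partitions

section BetaSets

variable {f : ℕ → ℕ} {N : ℕ}

lemma mem_betaSet {x : ℕ} : x ∈ betaSet f N ↔ ∃ i < N, f i + (N - 1 - i) = x := by
  simp [betaSet]

lemma injOn_betaSet (hf : Antitone f) : Set.InjOn (fun i => f i + (N - 1 - i)) (Set.Iio N) := by
  intro i hi j hj hij
  simp only [Set.mem_Iio] at hi hj hij
  rcases lt_trichotomy i j with h | h | h
  · have := hf h.le; omega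
  · exact h
  · have := hf h.le; omega

lemma card_betaSet (hf : Antitone f) : #(betaSet f N) = N := by
  rw [betaSet, card_image_of_injOn (by simpa using injOn_betaSet hf), card_range]

lemma lt_two_mul_of_mem_betaSet (hf : Antitone f) (h0 : f 0 ≤ N) {x : ℕ}
    (hx : x ∈ betaSet f N) : x < 2 * N := by
  obtain ⟨i, hi, rfl⟩ := mem_betaSet.1 hx
  have := hf (Nat.zero_le i)
  omega

lemma injOn_sub_betaSet (hf : Antitone f) (h0 : f 0 ≤ N) :
    Set.InjOn (2 * N - 1 - ·) (betaSet f N) := fun a ha b hb hab => by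
  have := lt_two_mul_of_mem_betaSet hf h0 ha
  have := lt_two_mul_of_mem_betaSet hf h0 hb
  simp only at hab
  omega

/-- A common element would be a cell of hook length `0`. -/
lemma disjoint_betaSet_image_betaSet_conjP (hf : IsPartition f) :
    Disjoint (betaSet f N) ((betaSet (conjP f) N).image (2 * N - 1 - ·)) := by
  rw [disjoint_left]
  intro x hx hx'
  obtain ⟨y, hy, hyx⟩ := mem_image.1 hx'
  obtain ⟨i, hi, rfl⟩ := mem_betaSet.1 hx
  obtain ⟨j, hj, rfl⟩ := mem_betaSet.1 hy
  have := hf.1 (Nat.zero_le i)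
  have := hf.isPartition_conjP.1 (Nat.zero_le j)
  have hji := hf.lt_of_lt_add_conjP (i := i) (j := j) (by omega)
  have := (hf.lt_conjP_iff i j).2 hji
  omega

lemma betaSet_union_image_betaSet_conjP (hf : IsPartition f) (h0 : f 0 ≤ N)
    (h0' : conjP f 0 ≤ N) :
    betaSet f N ∪ (betaSet (conjP f) N).image (2 * N - 1 - ·) = range (2 * N) := by
  have hlt' := fun y (hy : y ∈ betaSet (conjP f) N) =>
    lt_two_mul_of_mem_betaSet hf.isPartition_conjP.1 h0' hy
  refine eq_of_subset_of_card_le (fun x hx => ?_) ?_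
  · rw [mem_range]
    rcases mem_union.1 hx with hx | hx
    · exact lt_two_mul_of_mem_betaSet hf.1 h0 hx
    · obtain ⟨y, hy, rfl⟩ := mem_image.1 hx
      have := hlt' y hy
      omega
  · rw [card_union_of_disjoint (disjoint_betaSet_image_betaSet_conjP hf),
      card_image_of_injOn (injOn_sub_betaSet hf.isPartition_conjP.1 h0'), card_betaSet hf.1,
      card_betaSet hf.isPartition_conjP.1, card_range]
    omega

lemma filter_le_betaSet (hf : Antitone f) (h0 : f 0 ≤ N) :
    {x ∈ betaSet f N | N ≤ x} = (range (rk f)).image fun i => f i + (N - 1 - i) := by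
  ext x
  simp only [mem_filter, mem_betaSet, mem_image, mem_range, hf.lt_rk_iff]
  constructor
  · rintro ⟨⟨i, hi, rfl⟩, hN⟩
    exact ⟨i, by omega, rfl⟩
  · rintro ⟨i, hi, rfl⟩
    have := hf (Nat.zero_le i)
    exact ⟨⟨i, by omega, rfl⟩, by omega⟩

lemma card_filter_le_betaSet (hf : Antitone f) (h0 : f 0 ≤ N) :
    #{x ∈ betaSet f N | N ≤ x} = rk f := by
  have hrk : ∀ i < rk f, i < N := fun i hi => by
    have := (hf.lt_rk_iff i).1 hi
    have := hf (Nat.zero_le i)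
    omega
  rw [filter_le_betaSet hf h0, card_image_of_injOn, card_range]
  exact (injOn_betaSet hf).mono fun i hi => hrk i (by simpa using hi)

/-- Inside the Durfee square an orthogonal partition has `λ_i = λ'_i + 1`. -/
lemma filter_le_betaSet_eq_image_of_orthogonal (hf : IsPartition f) (horth : ZAsymmetric (-1) f)
    (h0 : f 0 ≤ N) (h0' : conjP f 0 ≤ N) :
    {x ∈ betaSet f N | N ≤ x} = {x ∈ betaSet (conjP f) N | N ≤ x}.image (· + 1) := by
  rw [filter_le_betaSet hf.1 h0, filter_le_betaSet hf.isPartition_conjP.1 h0', hf.rk_conjP,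
    image_image]
  refine image_congr fun i hi => ?_
  have := horth i (by simpa using hi)
  simp only [Function.comp_apply]
  omega

lemma mr_add_mr_conjP {t n : ℕ} (ht : 0 < t) (hf : IsPartition f) (h0 : f 0 ≤ n * t)
    (h0' : conjP f 0 ≤ n * t) {s : ℕ} (hs : s < t) :
    mr t f (n * t) s + mr t (conjP f) (n * t) (t - 1 - s) = 2 * n := by
  have hrefl : #{x ∈ (betaSet (conjP f) (n * t)).image (2 * (n * t) - 1 - ·) | x % t = s}
      = mr t (conjP f) (n * t) (t - 1 - s) := by
    rw [filter_image, card_image_of_injOn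
      ((injOn_sub_betaSet hf.isPartition_conjP.1 h0').mono (filter_subset _ _)), mr]
    refine congrArg card (filter_congr fun y hy => Nat.mod_eq_iff_mod_eq_sub_of_dvd hs ⟨2 * n, ?_⟩)
    have := lt_two_mul_of_mem_betaSet hf.isPartition_conjP.1 h0' hy
    rw [show 2 * (n * t) - 1 - y + y + 1 = 2 * (n * t) by omega]
    ring
  rw [mr, ← hrefl, ← card_union_of_disjoint
    (disjoint_filter_filter (disjoint_betaSet_image_betaSet_conjP hf)), ← filter_union,
    betaSet_union_image_betaSet_conjP hf h0 h0', show 2 * (n * t) = 2 * n * t by ring,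
    Nat.card_filter_range_mul_mod_eq ht hs]

lemma card_filter_mod_eq_and_le_betaSet_of_orthogonal {t : ℕ} (hf : IsPartition f)
    (horth : ZAsymmetric (-1) f) (h0 : f 0 ≤ N) (h0' : conjP f 0 ≤ N) {r : ℕ} (hr : r < t) :
    #{x ∈ betaSet (conjP f) N | x % t = r ∧ N ≤ x}
      = #{x ∈ betaSet f N | x % t = (r + 1) % t ∧ N ≤ x} := by
  have hmod : ∀ x, (x + 1) % t = (r + 1) % t ↔ x % t = r := fun x => by
    have : (x + 1) % t = (r + 1) % t ↔ x % t = r % t :=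
      ⟨Nat.ModEq.add_right_cancel' 1, Nat.ModEq.add_right 1⟩
    rwa [Nat.mod_eq_of_lt hr] at this
  simp_rw [and_comm (b := N ≤ _), ← filter_filter,
    filter_le_betaSet_eq_image_of_orthogonal hf horth h0 h0', filter_image,
    card_image_of_injective _ (add_left_injective 1), hmod]

end BetaSets

/-- On the `t`-abacus of `S` (runner `r` carrying the beads `x ≡ r mod t` at position `x / t`),
the beads of every runner are pushed up as far as possible. -/
def IsFlush (t : ℕ) (S : Finset ℕ) : Prop := ∀ x ∈ S, t ≤ x → x - t ∈ S

lemma IsTCore.isFlush_betaSet {t N : ℕ} {f : ℕ → ℕ} (hc : IsTCore t f) (hf : IsPartition f)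
    (h0 : f 0 ≤ N) (h0' : conjP f 0 ≤ N) : IsFlush t (betaSet f N) := by
  intro x hx hxt
  by_contra hnot
  have hlt := lt_two_mul_of_mem_betaSet hf.1 h0 hx
  have hmem : x - t ∈ range (2 * N) := mem_range.2 (by omega)
  rw [← betaSet_union_image_betaSet_conjP hf h0 h0', mem_union, or_iff_right hnot,
    mem_image] at hmem
  obtain ⟨y, hy, hyx⟩ := hmem
  obtain ⟨i, hi, rfl⟩ := mem_betaSet.1 hx
  obtain ⟨j, hj, rfl⟩ := mem_betaSet.1 hy
  have := hf.1 (Nat.zero_le i)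
  have := hf.isPartition_conjP.1 (Nat.zero_le j)
  have hhook : f i + conjP f j = i + j + 1 + t := by omega
  exact hc i j (hf.lt_of_lt_add_conjP (by omega)) hhook

namespace IsFlush

variable {t : ℕ} {S : Finset ℕ}

lemma sub_mul_mem (hS : IsFlush t S) {x : ℕ} (hx : x ∈ S) {k : ℕ} (hk : k * t ≤ x) :
    x - k * t ∈ S := by
  induction k with
  | zero => simpa
  | succ k ih =>
    rw [Nat.succ_mul] at hk ⊢
    rw [← Nat.sub_sub]
    exact hS _ (ih (by omega)) (by omega)

lemma mem_iff (hS : IsFlush t S) (ht : 0 < t) (x : ℕ) :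
    x ∈ S ↔ x / t < #{y ∈ S | y % t = x % t} := by
  have hx := Nat.div_add_mod' x t
  have hinj : Function.Injective (· * t + x % t) := fun a b h => by
    simpa [ht.ne'] using h
  constructor
  · intro hxS
    have hsub : (range (x / t + 1)).image (· * t + x % t) ⊆ {y ∈ S | y % t = x % t} := by
      intro y hy
      obtain ⟨k, hk, rfl⟩ := mem_image.1 hy
      rw [mem_range] at hk
      have hle : (x / t - k) * t ≤ x := by rw [Nat.sub_mul]; omega
      have hmem := hS.sub_mul_mem hxS hle
      rw [Nat.sub_mul, show x - (x / t * t - k * t) = k * t + x % t by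
        have : k * t ≤ x / t * t := Nat.mul_le_mul_right t (by omega)
        omega] at hmem
      exact mem_filter.2 ⟨hmem, Nat.mul_add_mod_of_lt (Nat.mod_lt x ht)⟩
    simpa [card_image_of_injective _ hinj] using card_le_card hsub
  · intro hlt
    by_contra hxS
    have hsub : {y ∈ S | y % t = x % t} ⊆ (range (x / t)).image (· * t + x % t) := by
      intro y hy
      obtain ⟨hyS, hyx⟩ := mem_filter.1 hy
      have hy := Nat.div_add_mod' y t
      refine mem_image.2 ⟨y / t, mem_range.2 (not_le.1 fun hle => hxS ?_), by omega⟩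
      have hmem := hS.sub_mul_mem hyS (k := y / t - x / t) (by rw [Nat.sub_mul]; omega)
      rwa [Nat.sub_mul, show y - (y / t * t - x / t * t) = x by
        have : x / t * t ≤ y / t * t := Nat.mul_le_mul_right t hle
        omega] at hmem
    have := card_le_card hsub
    rw [card_image_of_injective _ hinj, card_range] at this
    omega

lemma card_filter_mod_eq_and (hS : IsFlush t S) (ht : 0 < t) {r : ℕ} (hr : r < t)
    (p : ℕ → Prop) [DecidablePred p] :
    #{y ∈ S | y % t = r ∧ p (y / t)} = #{k ∈ range #{y ∈ S | y % t = r} | p k} := by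
  symm
  refine card_nbij' (· * t + r) (· / t) (fun k hk => ?_) (fun y hy => ?_) (fun k _ => ?_)
    (fun y hy => ?_)
  · simp only [coe_filter, mem_range, Set.mem_ofPred_eq] at hk ⊢
    rw [Nat.mul_add_mod_of_lt hr, Nat.mul_add_div_of_lt hr, hS.mem_iff ht,
      Nat.mul_add_div_of_lt hr, Nat.mul_add_mod_of_lt hr]
    exact ⟨hk.1, rfl, hk.2⟩
  · simp only [coe_filter, mem_range, Set.mem_ofPred_eq] at hy ⊢
    obtain ⟨hyS, rfl, hp⟩ := hy
    exact ⟨(hS.mem_iff ht y).1 hyS, hp⟩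
  · exact Nat.mul_add_div_of_lt hr
  · simp only [coe_filter, Set.mem_ofPred_eq] at hy
    simp only [← hy.2.1, Nat.div_add_mod']

lemma card_filter_mod_eq_and_mul_le (hS : IsFlush t S) (ht : 0 < t)
    {r : ℕ} (hr : r < t) (n : ℕ) :
    #{x ∈ S | x % t = r ∧ n * t ≤ x} = #{x ∈ S | x % t = r} - n := by
  have hIco : ∀ c, {k ∈ range c | n ≤ k} = Ico n c := fun c => by
    ext k
    simp only [mem_filter, mem_range, mem_Ico]
    omega
  rw [← Nat.card_Ico, ← hIco, ← hS.card_filter_mod_eq_and ht hr]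
  simp_rw [Nat.le_div_iff_mul_le ht]

end IsFlush

section Inversions

variable {t : ℕ}

def shiftRunner (t k x : ℕ) : ℕ := x / t * t + (x % t + k) % t

lemma shiftRunner_mod (ht : 0 < t) (k x : ℕ) : shiftRunner t k x % t = (x % t + k) % t :=
  Nat.mul_add_mod_of_lt (Nat.mod_lt _ ht)

lemma shiftRunner_div (ht : 0 < t) (k x : ℕ) : shiftRunner t k x / t = x / t :=
  Nat.mul_add_div_of_lt (Nat.mod_lt _ ht)

lemma shiftRunner_shiftRunner (ht : 0 < t) {k l : ℕ} (hkl : k + l = t) (x : ℕ) :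
    shiftRunner t l (shiftRunner t k x) = x := by
  rw [shiftRunner, shiftRunner_div ht, shiftRunner_mod ht, Nat.mod_add_mod, add_assoc, hkl,
    Nat.add_mod_right, Nat.mod_mod, Nat.div_add_mod']

lemma lt_and_mod_lt_iff (x y : ℕ) :
    y < x ∧ y % t < x % t ↔ y / t ≤ x / t ∧ y % t < x % t := by
  refine and_congr_left fun h => ⟨fun hyx => Nat.div_le_div_right hyx.le, fun hle => ?_⟩
  have := Nat.mul_le_mul_right t hle
  have := Nat.div_add_mod' x t
  have := Nat.div_add_mod' y t
  omega

lemma xor_lt_iff_xor_eq_zero {a b : ℕ} (ha : a < t) (hb : b < t) :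
    Xor (b < a) ((b + (t - 1)) % t < (a + (t - 1)) % t) ↔ Xor (a = 0) (b = 0) := by
  have hpred : ∀ r < t, (r + (t - 1)) % t = if r = 0 then t - 1 else r - 1 := fun r hr => by
    split_ifs with h
    · rw [h, zero_add, Nat.mod_eq_of_lt (by omega)]
    · rw [show r + (t - 1) = r - 1 + t by omega, Nat.add_mod_right, Nat.mod_eq_of_lt (by omega)]
  rw [hpred a ha, hpred b hb]
  split_ifs <;> simp only [Xor] <;> omega

end Inversions

namespace IsFlush

variable {t n : ℕ} {S : Finset ℕ}

lemma card_filter_xor_add_card_filter_mul_le (hS : IsFlush t S) (ht : 0 < t)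
    (h0 : #{x ∈ S | x % t = 0} = n) :
    #{q ∈ S ×ˢ S | q.2 / t ≤ q.1 / t ∧ Xor (q.1 % t = 0) (q.2 % t = 0)} + #{x ∈ S | n * t ≤ x}
      = (n + 1) * #{x ∈ S | x % t ≠ 0} := by
  set R := {x ∈ S | x % t ≠ 0}
  set C := {x ∈ S | x % t = 0}
  have hC : ∀ (p : ℕ → Prop) [DecidablePred p], #{w ∈ C | p (w / t)} = #{k ∈ range n | p k} := by
    intro p _
    rw [filter_filter, hS.card_filter_mod_eq_and ht ht p, h0]
  have hsplit : {q ∈ S ×ˢ S | q.2 / t ≤ q.1 / t ∧ Xor (q.1 % t = 0) (q.2 % t = 0)}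
      = {q ∈ R ×ˢ C | q.2 / t ≤ q.1 / t} ∪ {q ∈ C ×ˢ R | q.2 / t ≤ q.1 / t} := by
    ext q
    simp only [R, C, mem_union, mem_filter, mem_product]
    unfold Xor
    tauto
  have hdisj : Disjoint {q ∈ R ×ˢ C | q.2 / t ≤ q.1 / t} {q ∈ C ×ˢ R | q.2 / t ≤ q.1 / t} :=
    disjoint_filter_filter (disjoint_product.2 (Or.inl (disjoint_filter_filter_not S S _).symm))
  have hhigh : {x ∈ S | n * t ≤ x} = {x ∈ R | n ≤ x / t} := by
    ext x
    simp only [R, mem_filter, Nat.le_div_iff_mul_le ht]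
    refine ⟨fun ⟨hx, hle⟩ => ⟨⟨hx, fun h => ?_⟩, hle⟩, fun ⟨⟨hx, _⟩, hle⟩ => ⟨hx, hle⟩⟩
    have := (hS.mem_iff ht x).1 hx
    rw [h, h0, Nat.div_lt_iff_lt_mul ht] at this
    omega
  have hrange : ∀ a, #{k ∈ range n | k ≤ a} + #{k ∈ range n | a ≤ k} + (if n ≤ a then 1 else 0)
      = n + 1 := fun a => by
    rw [show {k ∈ range n | k ≤ a} = range (min n (a + 1)) by
        ext; simp only [mem_filter, mem_range]; omega,
      show {k ∈ range n | a ≤ k} = Ico a n by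
        ext; simp only [mem_filter, mem_range, mem_Ico]; omega,
      card_range, Nat.card_Ico]
    split_ifs <;> omega
  rw [hsplit, card_union_of_disjoint hdisj,
    card_filter_product_eq_sum_left (p := fun a b => b / t ≤ a / t),
    card_filter_product_eq_sum_right (p := fun a b => b / t ≤ a / t), hhigh, card_filter,
    ← sum_add_distrib, ← sum_add_distrib, mul_comm, ← smul_eq_mul, ← sum_const]
  exact sum_congr rfl fun z _ => by rw [hC (· ≤ z / t), hC (z / t ≤ ·), hrange]

/-- The second count is the inversion number for the order of the runners in which runner `0`
comes last. -/
lemma even_card_inv_add_card_inv_add_card_mul_le (hS : IsFlush t S) (ht : 0 < t)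
    (hcard : #S = n * t) (h0 : #{x ∈ S | x % t = 0} = n) :
    Even (#{q ∈ S ×ˢ S | q.2 / t ≤ q.1 / t ∧ q.2 % t < q.1 % t}
      + #{q ∈ S ×ˢ S | q.2 / t ≤ q.1 / t ∧ (q.2 % t + (t - 1)) % t < (q.1 % t + (t - 1)) % t}
      + #{x ∈ S | n * t ≤ x}) := by
  have hxor : ∀ q : ℕ × ℕ, Xor (q.2 / t ≤ q.1 / t ∧ q.2 % t < q.1 % t)
      (q.2 / t ≤ q.1 / t ∧ (q.2 % t + (t - 1)) % t < (q.1 % t + (t - 1)) % t)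
      ↔ q.2 / t ≤ q.1 / t ∧ Xor (q.1 % t = 0) (q.2 % t = 0) := fun q => by
    rw [← xor_lt_iff_xor_eq_zero (Nat.mod_lt _ ht) (Nat.mod_lt _ ht)]
    simp only [Xor]
    tauto
  have hR : #{x ∈ S | x % t ≠ 0} = n * (t - 1) := by
    have := card_filter_add_card_filter_not (s := S) (· % t = 0)
    simp only [← ne_eq] at this
    rw [Nat.mul_sub, mul_one]
    omega
  rw [card_filter_add_card_filter_eq, filter_congr fun q _ => hxor q, add_right_comm,
    hS.card_filter_xor_add_card_filter_mul_le ht h0, hR,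
    show (n + 1) * (n * (t - 1)) = n * (n + 1) * (t - 1) by ring]
  exact ((Nat.even_mul_succ_self n).mul_right _).add (even_two_mul _)

end IsFlush

/-- The runners agree beyond `N` (`card_filter_mod_eq_and_le_betaSet_of_orthogonal`) and are
complementary (`mr_add_mr_conjP`), which pins them down. -/
lemma mr_conjP_of_orthogonal {t n : ℕ} {f : ℕ → ℕ} (ht : 0 < t) (hf : IsPartition f)
    (hc : IsTCore t f) (horth : ZAsymmetric (-1) f) (h0 : f 0 ≤ n * t) (h0' : conjP f 0 ≤ n * t)
    {r : ℕ} (hr : r < t) : mr t (conjP f) (n * t) r = mr t f (n * t) ((r + 1) % t) := by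
  have hcomp := fun s (hs : s < t) => mr_add_mr_conjP ht hf h0 h0' hs
  have hhigh : ∀ r < t, mr t (conjP f) (n * t) r - n = mr t f (n * t) ((r + 1) % t) - n := by
    intro r hr
    rw [mr, mr, ← (hc.isFlush_betaSet hf h0 h0').card_filter_mod_eq_and_mul_le ht
      (Nat.mod_lt _ ht), ← ((hf.isTCore_conjP hc).isFlush_betaSet hf.isPartition_conjP
      h0' (by rwa [hf.conjP_conjP])).card_filter_mod_eq_and_mul_le ht hr,
      card_filter_mod_eq_and_le_betaSet_of_orthogonal hf horth h0 h0' hr]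
  rcases Nat.lt_or_ge (r + 1) t with hr1 | hr1
  · have h1 := hcomp (r + 1) hr1
    have h2 := hcomp (t - 1 - r) (by omega)
    have h3 := hhigh (t - 2 - r) (by omega)
    rw [show t - 1 - (r + 1) = t - 2 - r by omega] at h1
    rw [show t - 1 - (t - 1 - r) = r by omega] at h2
    rw [show (t - 2 - r + 1) % t = t - 1 - r by rw [Nat.mod_eq_of_lt (by omega)]; omega] at h3
    have h4 := hhigh r hr
    rw [Nat.mod_eq_of_lt hr1] at h4 ⊢
    omega
  · have h1 := hcomp 0 ht
    have h2 := hhigh r hr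
    rw [show t - 1 - 0 = r by omega] at h1
    rw [show (r + 1) % t = 0 by rw [show r + 1 = t by omega, Nat.mod_self]] at h2 ⊢
    omega

lemma mr_zero_of_orthogonal {t n : ℕ} {f : ℕ → ℕ} (ht : 0 < t) (hf : IsPartition f)
    (hc : IsTCore t f) (horth : ZAsymmetric (-1) f) (h0 : f 0 ≤ n * t) (h0' : conjP f 0 ≤ n * t) :
    mr t f (n * t) 0 = n := by
  have h1 := mr_add_mr_conjP ht hf h0 h0' ht
  have h2 := mr_conjP_of_orthogonal ht hf hc horth h0 h0' (r := t - 1) (by omega)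
  rw [Nat.sub_zero] at h1
  rw [Nat.sub_one_add_one ht.ne', Nat.mod_self] at h2
  omega

lemma shiftRunner_mem_betaSet_conjP_iff_of_orthogonal {t n : ℕ} {f : ℕ → ℕ} (ht : 0 < t)
    (hf : IsPartition f) (hc : IsTCore t f) (horth : ZAsymmetric (-1) f) (h0 : f 0 ≤ n * t)
    (h0' : conjP f 0 ≤ n * t) (x : ℕ) :
    shiftRunner t (t - 1) x ∈ betaSet (conjP f) (n * t) ↔ x ∈ betaSet f (n * t) := by
  have hβ' := (hf.isTCore_conjP hc).isFlush_betaSet hf.isPartition_conjP h0'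
    (by rwa [hf.conjP_conjP])
  rw [hβ'.mem_iff ht, (hc.isFlush_betaSet hf h0 h0').mem_iff ht, shiftRunner_div ht,
    shiftRunner_mod ht]
  change _ < mr t (conjP f) (n * t) _ ↔ _ < mr t f (n * t) _
  rw [mr_conjP_of_orthogonal ht hf hc horth h0 h0' (Nat.mod_lt _ ht), Nat.mod_add_mod, add_assoc,
    Nat.sub_add_cancel ht, Nat.add_mod_right, Nat.mod_mod]

lemma sgnW_eq_neg_one_pow (t : ℕ) (f : ℕ → ℕ) (N : ℕ) :
    sgnW t f N =
      (-1) ^ #{q ∈ betaSet f N ×ˢ betaSet f N | q.2 / t ≤ q.1 / t ∧ q.2 % t < q.1 % t} := by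
  simp_rw [sgnW, lt_and_mod_lt_iff]

theorem sgnW_mul_sgnW_conjP_of_orthogonal {t n : ℕ} {f : ℕ → ℕ} (ht : 0 < t) (hf : IsPartition f)
    (hc : IsTCore t f) (horth : ZAsymmetric (-1) f) (h0 : f 0 ≤ n * t)
    (h0' : conjP f 0 ≤ n * t) :
    sgnW t f (n * t) * sgnW t (conjP f) (n * t) = (-1) ^ rk f := by
  rw [sgnW_eq_neg_one_pow, sgnW_eq_neg_one_pow, ← pow_add, ← card_filter_le_betaSet hf.1 h0,
    card_filter_product_eq_of_leftInverse (e' := shiftRunner t 1)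
      (shiftRunner_shiftRunner ht (by omega)) (shiftRunner_shiftRunner ht (by omega))
      (shiftRunner_mem_betaSet_conjP_iff_of_orthogonal ht hf hc horth h0 h0')
      (fun x y => y / t ≤ x / t ∧ y % t < x % t)]
  simp only [shiftRunner_div ht, shiftRunner_mod ht]
  have heven := Nat.even_iff.1 <|
    (hc.isFlush_betaSet hf h0 h0').even_card_inv_add_card_inv_add_card_mul_le ht
      (card_betaSet hf.1) (mr_zero_of_orthogonal ht hf hc horth h0 h0')
  rw [neg_one_pow_eq_pow_mod_two, neg_one_pow_eq_pow_mod_two (n := #_)]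
  congr 1
  omega

theorem sgnW_mul_sgnW_conj_general (t n : ℕ) (ht : 2 ≤ t) (lam : ℕ → ℕ)
    (hlam : IsPartition lam) (hcore : IsTCore t lam)
    (hasym : ZAsymmetric (-1) lam ∨ ZAsymmetric 1 lam)
    (hlen : plen lam ≤ n * t) (hwidth : lam 0 ≤ n * t) :
    sgnW t lam (n * t) * sgnW t (conjP lam) (n * t) = (-1 : ℤ) ^ rk lam := by
  have ht : 0 < t := by omega
  have hlen' : conjP lam 0 ≤ n * t := hlam.conjP_zero_le_plen.trans hlen
  rcases hasym with horth | hsymp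
  · exact sgnW_mul_sgnW_conjP_of_orthogonal ht hlam hcore horth hwidth hlen'
  · have := sgnW_mul_sgnW_conjP_of_orthogonal ht hlam.isPartition_conjP
      (hlam.isTCore_conjP hcore) (hlam.zAsymmetric_conjP hsymp) hlen'
      (by rwa [hlam.conjP_conjP])
    rwa [hlam.conjP_conjP, mul_comm, hlam.rk_conjP] at this

/-- **Lemma.** Let `λ` be an orthogonal or symplectic `t`-core whose diagram is
contained in an `nt × nt` square.  Then
`sgn(w_t(λ;nt)) · sgn(w_t(λ';nt)) = (-1)^{rk(λ)}`. -/
theorem sgnW_mul_sgnW_conj (t n : ℕ) (ht : 2 ≤ t) (hn : 0 < n) (lam : ℕ → ℕ)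
    (hlam : IsPartition lam) (hcore : IsTCore t lam)
    (hasym : ZAsymmetric (-1) lam ∨ ZAsymmetric 1 lam)
    (hlen : plen lam ≤ n * t) (hwidth : lam 0 ≤ n * t) :
    sgnW t lam (n * t) * sgnW t (conjP lam) (n * t) = (-1 : ℤ) ^ rk lam :=
  sgnW_mul_sgnW_conj_general t n ht lam hlam hcore hasym hlen hwidth
end
end

section
/- Let λ be a partition of length at most n+1. Then rs_{(λ_1+1,…,λ_n+1),(λ_2,…,λ_{n+1})} + rs_{(λ_1,…,λ_{n+1}),(λ_2+1,…,λ_n+1)} = so_{(λ_1+1,…,λ_n+1)} · so^−_{(λ_2,…,λ_{n+1})} in the ring of symmetric functions. -/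
open scoped BigOperators

noncomputable section

/-!
With `p i = lam i - i` (`shiftedParts`), index the columns of a Koike matrix by shifts `c`: every
row is then `(h_{q+c})_c` or `(h_{q+1-c})_c` for some `q`, and both determinants of the theorem use
the shifts `c = 1 - n, …, n`. The first one has rows of the first kind for `q = p 0, …, p (n-1)`
and of the second kind for `q = p 1, …, p n`; the second one has rows of the first kind for
`q = p 0, …, p n` and of the second kind for `q = p 1, …, p (n-1)`. After a cyclic reordering of
its rows, of sign `-1`, the second matrix differs from the first only in the row of `p n`, so the
sum of the two determinants is a single determinant, whose row for `p n` is
`(h_{p n+1-c} - h_{p n+c})_c`. Adding column `1 - c` to column `c` for `c ≥ 1` and subtracting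
from each row of the second kind the row of the first kind with the same `q` makes it block
triangular, with the matrices of `so` and `so⁻` as diagonal blocks.
-/

namespace Matrix

theorem fromBlocks_apply_inl {l m n o α : Type*} (A : Matrix n l α) (B : Matrix n m α)
    (C : Matrix o l α) (D : Matrix o m α) (i : n) :
    fromBlocks A B C D (.inl i) = Sum.elim (A i) (B i) := rfl

theorem fromBlocks_apply_inr {l m n o α : Type*} (A : Matrix n l α) (B : Matrix n m α)
    (C : Matrix o l α) (D : Matrix o m α) (i : o) :
    fromBlocks A B C D (.inr i) = Sum.elim (C i) (D i) := rfl

variable {R : Type*} [CommRing R]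

theorem sumElim_vecMul_fromBlocks_one_zero_one_one {n : Type*} [Fintype n] [DecidableEq n]
    (x y : n → R) : Sum.elim x y ᵥ* fromBlocks 1 0 1 1 = Sum.elim (x + y) y := by
  simp [vecMul_fromBlocks]

theorem det_fromBlocks_mul_add {m n : Type*} [Fintype m] [Fintype n] [DecidableEq m]
    [DecidableEq n] (A : Matrix m m R) (B : Matrix m n R) (S : Matrix n m R)
    (D : Matrix n n R) : (fromBlocks A B (S * A) (S * B + D)).det = A.det * D.det := by
  have hfactor :
      fromBlocks A B (S * A) (S * B + D) = fromBlocks 1 0 S 1 * fromBlocks A B 0 D := by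
    simp [fromBlocks_multiply]
  rw [hfactor, det_mul, det_fromBlocks_zero₁₂, det_fromBlocks_zero₂₁]
  simp

theorem det_of_fin_eq_of_unitriangular_tail (A : ℕ → ℕ → R) {m N : ℕ} (hmN : m ≤ N)
    (hA : ∀ i, m ≤ i → ∀ j ≤ i, A i j = if j = i then 1 else 0) :
    (of fun i j : Fin N => A i j).det = (of fun i j : Fin m => A i j).det := by
  induction N, hmN using Nat.le_induction with
  | base => rfl
  | succ N hmN ih =>
    rw [det_succ_row _ (Fin.last N), Fin.sum_univ_castSucc, Finset.sum_eq_zero, zero_add]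
    · simp [hA N hmN, Fin.succAbove_last, ← ih]
      rfl
    · intro j _
      simp [hA N hmN j (by omega), j.isLt.ne]

def shiftUp (k : ℕ) : Matrix (Fin (k + 1)) (Fin (k + 1)) R :=
  of fun i j => if (j : ℕ) = i + 1 then 1 else 0

theorem shiftUp_mul_castSucc {k : ℕ} {α : Type*} (M : Matrix (Fin (k + 1)) α R) (i : Fin k) :
    ((shiftUp k : Matrix _ _ R) * M) i.castSucc = M i.succ := by
  ext j
  rw [mul_apply, Finset.sum_eq_single i.succ] <;> simp [shiftUp, Fin.ext_iff]
  omega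

theorem shiftUp_mul_last {k : ℕ} {α : Type*} (M : Matrix (Fin (k + 1)) α R) :
    ((shiftUp k : Matrix _ _ R) * M) (Fin.last k) = 0 := by
  ext j
  rw [mul_apply, Pi.zero_apply]
  refine Finset.sum_eq_zero fun t _ => ?_
  simp [shiftUp, t.isLt.ne]

end Matrix

open Matrix

open Equiv in
def blockCycle (k : ℕ) : Perm (Fin (k + 1) ⊕ Fin (k + 1)) :=
  swap (.inl (Fin.last k)) (.inr 0) * sumCongr (finRotate (k + 1))⁻¹ (finRotate (k + 1))

theorem sign_blockCycle (k : ℕ) : Equiv.Perm.sign (blockCycle k) = -1 := by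
  rw [blockCycle, Equiv.Perm.sign_mul, Equiv.Perm.sign_swap Sum.inl_ne_inr,
    Equiv.Perm.sign_sumCongr, Equiv.Perm.sign_inv, sign_finRotate, ← mul_pow]
  simp

theorem blockCycle_inl_zero (k : ℕ) : blockCycle k (.inl 0) = .inr 0 := by
  have : (-1 : Fin (k + 1)) = Fin.last k := Fin.ext (by simp [Fin.coe_neg_one])
  simp [blockCycle, Equiv.Perm.inv_def, this]

theorem blockCycle_inl_succ (k : ℕ) (i : Fin k) :
    blockCycle k (.inl i.succ) = .inl i.castSucc := by
  have : i.succ - 1 = i.castSucc := sub_eq_iff_eq_add.2 Fin.coeSucc_eq_succ.symm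
  simp [blockCycle, Equiv.Perm.inv_def, this, Equiv.swap_apply_of_ne_of_ne,
    (Fin.castSucc_lt_last i).ne]

theorem blockCycle_inr_castSucc (k : ℕ) (i : Fin k) :
    blockCycle k (.inr i.castSucc) = .inr i.succ := by
  simp [blockCycle, Fin.coeSucc_eq_succ, Equiv.swap_apply_of_ne_of_ne]

theorem blockCycle_inr_last (k : ℕ) : blockCycle k (.inr (Fin.last k)) = .inl (Fin.last k) := by
  simp [blockCycle]

def colEquiv (k : ℕ) : Fin (k + 1) ⊕ Fin (k + 1) ≃ Fin (k + 2) ⊕ Fin k where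
  toFun := Sum.elim (fun j => .inl j.succ) (Fin.cases (.inl 0) .inr)
  invFun := Sum.elim (Fin.cases (.inr 0) .inl) (fun j => .inr j.succ)
  left_inv := by
    rintro (j | j)
    · simp
    · cases j using Fin.cases <;> simp
  right_inv := by
    rintro (j | j)
    · cases j using Fin.cases <;> simp
    · simp

theorem colEquiv_inl (k : ℕ) (j : Fin (k + 1)) : colEquiv k (.inl j) = .inl j.succ := rfl

theorem colEquiv_inr_zero (k : ℕ) : colEquiv k (.inr 0) = .inl 0 := rfl

theorem colEquiv_inr_succ (k : ℕ) (j : Fin k) : colEquiv k (.inr j.succ) = .inr j := rfl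

section Rows

variable {R : Type*} (h : ℤ → R)

def highRow {n : ℕ} (q : ℤ) : Fin n → R := fun j => h (q + j + 1)

def lowRow {n : ℕ} (q : ℤ) : Fin n → R := fun j => h (q - j)

/-- Column `inl j` stands for the shift `c = j + 1` and column `inr j` for `c = -j`, so that the
rows of type `a` are `(h (a i + c))_c` and those of type `b` are `(h (b i + 1 - c))_c`. -/
def pairMatrix {n : ℕ} (a b : ℕ → ℤ) : Matrix (Fin n ⊕ Fin n) (Fin n ⊕ Fin n) R :=
  of <| Sum.elim (fun i => Sum.elim (highRow h (a i)) (lowRow h (a i)))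
    (fun i => Sum.elim (lowRow h (b i)) (highRow h (b i)))

def koikeMatrix (n m : ℕ) (lam mu : ℕ → ℤ) : Matrix (Fin n ⊕ Fin m) (Fin n ⊕ Fin m) R :=
  fromBlocks
    (of fun i j : Fin n => h (lam i - (i : ℤ) + (j : ℤ)))
    (of fun (i : Fin n) (j : Fin m) => h (lam i - (i : ℤ) - (j : ℤ) - 1))
    (of fun (i : Fin m) (j : Fin n) => h (mu i - (i : ℤ) - (j : ℤ) - 1))
    (of fun i j : Fin m => h (mu i - (i : ℤ) + (j : ℤ)))

theorem rsN_eq_det_koikeMatrix (n m : ℕ) (lam mu : ℕ → ℤ) :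
    rsN n m lam mu = (koikeMatrix hh n m lam mu).det := rfl

theorem pairMatrix_apply_inl {n : ℕ} (a b : ℕ → ℤ) (i : Fin n) :
    pairMatrix h a b (.inl i) = Sum.elim (highRow h (a i)) (lowRow h (a i)) := rfl

theorem pairMatrix_apply_inr {n : ℕ} (a b : ℕ → ℤ) (i : Fin n) :
    pairMatrix h a b (.inr i) = Sum.elim (lowRow h (b i)) (highRow h (b i)) := rfl

theorem koikeMatrix_eq_pairMatrix (n : ℕ) (lam mu : ℕ → ℤ) :
    koikeMatrix h n n lam mu = pairMatrix h (fun i => lam i - i - 1) (fun i => mu i - i - 1) := by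
  ext (i | i) (j | j) <;> simp [koikeMatrix, pairMatrix, highRow, lowRow] <;> ring_nf

theorem koikeMatrix_inl_colEquiv (k : ℕ) (lam mu : ℕ → ℤ) (i : Fin (k + 2))
    (s : Fin (k + 1) ⊕ Fin (k + 1)) :
    koikeMatrix h (k + 2) k lam mu (.inl i) (colEquiv k s) =
      Sum.elim (highRow h (lam i - i)) (lowRow h (lam i - i)) s := by
  rcases s with j | j
  · simp [koikeMatrix, colEquiv, highRow]; ring_nf
  · cases j using Fin.cases
    · simp [koikeMatrix, colEquiv, lowRow]
    · simp [koikeMatrix, colEquiv, lowRow]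
      ring_nf

theorem koikeMatrix_inr_colEquiv (k : ℕ) (lam mu : ℕ → ℤ) (i : Fin k)
    (s : Fin (k + 1) ⊕ Fin (k + 1)) :
    koikeMatrix h (k + 2) k lam mu (.inr i) (colEquiv k s) =
      Sum.elim (lowRow h (mu i - i - 2)) (highRow h (mu i - i - 2)) s := by
  rcases s with j | j
  · simp [koikeMatrix, colEquiv, lowRow]; ring_nf
  · cases j using Fin.cases <;> simp [koikeMatrix, colEquiv, highRow] <;> ring_nf

theorem koikeMatrix_submatrix_blockCycle (k : ℕ) (lam mu : ℕ → ℤ) :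
    ((koikeMatrix h (k + 2) k lam mu).submatrix (colEquiv k) (colEquiv k)).submatrix
        (blockCycle k) id =
      (pairMatrix h (fun i => lam i - i) (fun i => mu i - i - 2)).updateRow (.inr (Fin.last k))
        (Sum.elim (highRow h (lam (k + 1) - (k + 1))) (lowRow h (lam (k + 1) - (k + 1)))) := by
  ext x s
  rcases x with i | i
  · cases i using Fin.cases with
    | zero =>
      simp only [submatrix_apply, id, blockCycle_inl_zero, colEquiv_inr_zero,
        koikeMatrix_inl_colEquiv]
      simp [pairMatrix]
    | succ i =>
      simp only [submatrix_apply, id, blockCycle_inl_succ, colEquiv_inl,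
        koikeMatrix_inl_colEquiv]
      simp [pairMatrix]
  · cases i using Fin.lastCases with
    | last =>
      simp only [submatrix_apply, id, blockCycle_inr_last, colEquiv_inl,
        koikeMatrix_inl_colEquiv]
      simp
    | cast i =>
      simp only [submatrix_apply, id, blockCycle_inr_castSucc, colEquiv_inr_succ,
        koikeMatrix_inr_colEquiv]
      simp [pairMatrix]

end Rows

section Determinants

variable {R : Type*} [CommRing R] (h : ℤ → R)

theorem det_koikeMatrix_eq_neg (k : ℕ) (lam mu : ℕ → ℤ) :
    (koikeMatrix h (k + 2) k lam mu).det =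
      -((pairMatrix h (fun i => lam i - i) (fun i => mu i - i - 2)).updateRow (.inr (Fin.last k))
        (Sum.elim (highRow h (lam (k + 1) - (k + 1))) (lowRow h (lam (k + 1) - (k + 1))))).det := by
  rw [← koikeMatrix_submatrix_blockCycle, det_permute, det_submatrix_equiv_self, sign_blockCycle]
  simp

theorem det_pairMatrix_sub_det_updateRow (p : ℕ → ℤ) (k : ℕ) :
    (pairMatrix h p (fun i => p (i + 1)) : Matrix (Fin (k + 1) ⊕ Fin (k + 1)) _ R).det -
      ((pairMatrix h p fun i => p (i + 1)).updateRow (.inr (Fin.last k))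
        (Sum.elim (highRow h (p (k + 1))) (lowRow h (p (k + 1))))).det =
    (of fun i : Fin (k + 1) => highRow h (p i) + lowRow h (p i)).det *
      (of fun i : Fin (k + 1) => highRow h (p (i + 1)) - lowRow h (p (i + 1))).det := by
  set M : Matrix (Fin (k + 1) ⊕ Fin (k + 1)) _ R := pairMatrix h p fun i => p (i + 1)
  set u := Sum.elim (highRow h (p (k + 1))) (lowRow h (p (k + 1)))
  set r : Fin (k + 1) ⊕ Fin (k + 1) := .inr (Fin.last k)
  set P : Matrix (Fin (k + 1)) (Fin (k + 1)) R := of fun i => highRow h (p i) + lowRow h (p i)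
  set Y : Matrix (Fin (k + 1)) (Fin (k + 1)) R := of fun i => lowRow h (p i)
  set Q : Matrix (Fin (k + 1)) (Fin (k + 1)) R :=
    of fun i => highRow h (p (i + 1)) - lowRow h (p (i + 1))
  have hsplit : M.det = (M.updateRow r (M r - u)).det + (M.updateRow r u).det := by
    rw [← det_updateRow_add, sub_add_cancel, updateRow_eq_self]
  -- adding the `inr` columns to the `inl` columns turns each row of type `b` into the next row
  -- of type `a` plus a row of `so⁻`
  have hfold : M.updateRow r (M r - u) * fromBlocks 1 0 1 1 =
      fromBlocks P Y (shiftUp k * P) (shiftUp k * Y + Q) := by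
    rw [updateRow_mul]
    funext x
    rcases x with i | i
    · rw [updateRow_ne (by simp [r]), mul_apply_eq_vecMul]
      simp only [M, pairMatrix_apply_inl, fromBlocks_apply_inl,
        sumElim_vecMul_fromBlocks_one_zero_one_one, P, Y]
      rfl
    · induction i using Fin.lastCases with
      | last =>
        rw [updateRow_self]
        simp only [M, pairMatrix_apply_inr, fromBlocks_apply_inr, u, r,
          ← Sum.elim_sub_sub, sumElim_vecMul_fromBlocks_one_zero_one_one, P, Y, Q]
        funext s
        rcases s with j | j <;> simp [shiftUp_mul_last, Fin.val_last]
      | cast i =>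
        rw [updateRow_ne (by simp [r]), mul_apply_eq_vecMul]
        simp only [M, pairMatrix_apply_inr, fromBlocks_apply_inr,
          sumElim_vecMul_fromBlocks_one_zero_one_one, P, Y, Q]
        funext s
        rcases s with j | j <;> simp [shiftUp_mul_castSucc, add_comm]
  have hdet := congrArg det hfold
  rw [det_mul, det_fromBlocks_zero₁₂, det_one, mul_one, mul_one,
    det_fromBlocks_mul_add] at hdet
  rw [hsplit, hdet, add_sub_cancel_right]

end Determinants

theorem hh_of_neg {r : ℤ} (hr : r < 0) : hh r = 0 := by simp [hh, hr]

theorem hh_zero : hh 0 = 1 := by simp [hh]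

theorem plen_le {w : ℕ → ℕ} {N : ℕ} (hw : ∀ i, N ≤ i → w i = 0) : plen w ≤ N :=
  Nat.sInf_le hw

theorem eq_zero_of_plen_le {w : ℕ → ℕ} {N : ℕ} (hw : ∀ i, N ≤ i → w i = 0) {i : ℕ}
    (hi : plen w ≤ i) : w i = 0 :=
  Nat.sInf_mem (s := {N | ∀ i, N ≤ i → w i = 0}) ⟨N, hw⟩ i hi

theorem hh_of_plen_le {w : ℕ → ℕ} {N : ℕ} (hw : ∀ i, N ≤ i → w i = 0) {i j : ℕ}
    (hi : plen w ≤ i) (hj : j ≤ i) :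
    hh ((w i : ℤ) - i + j) = (if j = i then 1 else 0 : SymF) ∧
      hh ((w i : ℤ) - i - j - 1) = 0 := by
  rw [eq_zero_of_plen_le hw hi]
  refine ⟨?_, hh_of_neg (by omega)⟩
  split_ifs with hji
  · rw [← hh_zero]; congr 1; omega
  · exact hh_of_neg (by omega)

theorem soU_eq_det {w : ℕ → ℕ} {N : ℕ} (hw : ∀ i, N ≤ i → w i = 0) :
    soU w =
      (of fun i j : Fin N => hh ((w i : ℤ) - i + j) + hh ((w i : ℤ) - i - j - 1)).det := by
  refine (det_of_fin_eq_of_unitriangular_tail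
    (fun i j => hh ((w i : ℤ) - i + j) + hh ((w i : ℤ) - i - j - 1)) (plen_le hw)
    fun i hi j hj => ?_).symm
  obtain ⟨h₁, h₂⟩ := hh_of_plen_le hw hi hj
  rw [h₁, h₂, add_zero]

theorem soMinusU_eq_det {w : ℕ → ℕ} {N : ℕ} (hw : ∀ i, N ≤ i → w i = 0) :
    soMinusU w =
      (of fun i j : Fin N => hh ((w i : ℤ) - i + j) - hh ((w i : ℤ) - i - j - 1)).det := by
  refine (det_of_fin_eq_of_unitriangular_tail
    (fun i j => hh ((w i : ℤ) - i + j) - hh ((w i : ℤ) - i - j - 1)) (plen_le hw)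
    fun i hi j hj => ?_).symm
  obtain ⟨h₁, h₂⟩ := hh_of_plen_le hw hi hj
  rw [h₁, h₂, sub_zero]

def shiftedParts (lam : ℕ → ℕ) (i : ℕ) : ℤ := lam i - i

section Specialization

variable (lam : ℕ → ℕ) (k : ℕ)

theorem rsN_eq_det_pairMatrix :
    rsN (k + 1) (k + 1) (fun i => (lam i : ℤ) + 1) (fun i => (lam (i + 1) : ℤ)) =
      (pairMatrix hh (shiftedParts lam) (fun i => shiftedParts lam (i + 1)) :
        Matrix (Fin (k + 1) ⊕ Fin (k + 1)) _ SymF).det := by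
  rw [rsN_eq_det_koikeMatrix, koikeMatrix_eq_pairMatrix]
  congr
  all_goals funext i; simp only [shiftedParts]; push_cast; ring

theorem rsN_eq_neg_det_updateRow :
    rsN (k + 2) k (fun i => (lam i : ℤ)) (fun i => (lam (i + 1) : ℤ) + 1) =
      -((pairMatrix hh (shiftedParts lam) fun i => shiftedParts lam (i + 1)).updateRow
        (.inr (Fin.last k)) (Sum.elim (highRow hh (shiftedParts lam (k + 1)))
          (lowRow hh (shiftedParts lam (k + 1))))).det := by
  rw [rsN_eq_det_koikeMatrix, det_koikeMatrix_eq_neg]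
  congr
  all_goals funext i; simp only [shiftedParts]; push_cast; ring

theorem soU_eq_det_shiftedParts :
    soU (fun i => if i < k + 1 then lam i + 1 else 0) =
      (of fun i : Fin (k + 1) =>
        highRow hh (shiftedParts lam i) + lowRow hh (shiftedParts lam i)).det := by
  rw [soU_eq_det (N := k + 1) fun i hi => if_neg (by omega)]
  congr; ext i j; simp [i.isLt, highRow, lowRow, shiftedParts]; ring_nf

theorem soMinusU_eq_det_shiftedParts :
    soMinusU (fun i => if i < k + 1 then lam (i + 1) else 0) =
      (of fun i : Fin (k + 1) =>
        highRow hh (shiftedParts lam (i + 1)) - lowRow hh (shiftedParts lam (i + 1))).det := by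
  rw [soMinusU_eq_det (N := k + 1) fun i hi => if_neg (by omega)]
  congr; ext i j; simp [i.isLt, highRow, lowRow, shiftedParts]; ring_nf

end Specialization

theorem rs_sum_eq_so_mul_soMinus_general (n : ℕ) (hn : 0 < n) (lam : ℕ → ℕ) :
    rsN n n (fun i => (lam i : ℤ) + 1) (fun i => (lam (i + 1) : ℤ)) +
      rsN (n + 1) (n - 1) (fun i => (lam i : ℤ)) (fun i => (lam (i + 1) : ℤ) + 1) =
      soU (fun i => if i < n then lam i + 1 else 0) *
        soMinusU (fun i => if i < n then lam (i + 1) else 0) := by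
  obtain ⟨k, rfl⟩ : ∃ k, n = k + 1 := ⟨n - 1, by omega⟩
  rw [Nat.add_sub_cancel, rsN_eq_det_pairMatrix, rsN_eq_neg_det_updateRow,
    soU_eq_det_shiftedParts, soMinusU_eq_det_shiftedParts, ← det_pairMatrix_sub_det_updateRow]
  ring

/-- **Theorem (Ayyer–Behrend; universal form).** For `λ` of length at most `n+1`,
`rs_{(λ₁+1,…,λ_n+1),(λ₂,…,λ_{n+1})} + rs_{(λ₁,…,λ_{n+1}),(λ₂+1,…,λ_n+1)}
  = so_{(λ₁+1,…,λ_n+1)} · so⁻_{(λ₂,…,λ_{n+1})}`. -/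
theorem rs_sum_eq_so_mul_soMinus (n : ℕ) (hn : 0 < n) (lam : ℕ → ℕ)
    (hlam : IsPartition lam) (hlen : plen lam ≤ n + 1) :
    rsN n n (fun i => (lam i : ℤ) + 1) (fun i => (lam (i + 1) : ℤ)) +
      rsN (n + 1) (n - 1) (fun i => (lam i : ℤ)) (fun i => (lam (i + 1) : ℤ) + 1) =
      soU (fun i => if i < n then lam i + 1 else 0) *
        soMinusU (fun i => if i < n then lam (i + 1) else 0) :=
  rs_sum_eq_so_mul_soMinus_general n hn lam

end
end
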